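/- For every n ≥ 0, the number of Stirling permutations of order n that avoid both of the patterns 213 and 1122 equals the n-th Catalan number C_n = C(2n, n)/(n+1). -/

import Mathlib

open scoped Classical

/-- `σ` is a Stirling permutation of order `n`: each letter `1,…,n` occurs
exactly twice and every entry strictly between the two occurrences of a letter
is greater than that letter. -/
def IsStirling (n : ℕ) (σ : List ℕ) : Prop :=
  (∀ i : ℕ, σ.count i = if 1 ≤ i ∧ i ≤ n then 2 else 0) ∧
  (∀ j k l : ℕ, j < k → k < l → l < σ.length →
    σ.getD j 0 = σ.getD l 0 → σ.getD j 0 < σ.getD k 0)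

/-- `σ` contains the pattern word `τ`. -/
def Contains (σ τ : List ℕ) : Prop :=
  ∃ ι : Fin τ.length → Fin σ.length, StrictMono ι ∧
    ∀ s t : Fin τ.length, τ.get s < τ.get t ↔ σ.get (ι s) < σ.get (ι t)

/-- `σ` avoids the pattern word `τ`. -/
def Avoids (σ τ : List ℕ) : Prop := ¬ Contains σ τ

/-- Number of adjacent pairs of `σ` satisfying the relation `R`. -/
noncomputable def statCount (R : ℕ → ℕ → Prop) (σ : List ℕ) : ℕ :=
  Set.ncard {i : ℕ | i + 1 < σ.length ∧ R (σ.getD i 0) (σ.getD (i + 1) 0)}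

/-- Number of descents. -/
noncomputable def desStat (σ : List ℕ) : ℕ := statCount (· > ·) σ
/-- Number of ascents. -/
noncomputable def ascStat (σ : List ℕ) : ℕ := statCount (· < ·) σ
/-- Number of plateaus. -/
noncomputable def platStat (σ : List ℕ) : ℕ := statCount (· = ·) σ

/-- helper: getD from membership -/
lemma mem_getD {l : List ℕ} {x : ℕ} (h : x ∈ l) :
    ∃ i, i < l.length ∧ l.getD i 0 = x := by
  obtain ⟨n, hn, e⟩ := List.getElem_of_mem h
  exact ⟨n, hn, by rw [List.getD_eq_getElem _ _ hn, e]⟩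

lemma getD_mem {l : List ℕ} {i : ℕ} (h : i < l.length) : l.getD i 0 ∈ l := by
  rw [List.getD_eq_getElem _ _ h]; exact List.getElem_mem h

lemma two_idx {l : List ℕ} {x : ℕ} (h : 2 ≤ l.count x) :
    ∃ i j, i < j ∧ j < l.length ∧ l.getD i 0 = x ∧ l.getD j 0 = x := by
  obtain ⟨n, m, hnm, he1, he2⟩ := List.duplicate_iff_exists_distinct_get.mp
    (List.duplicate_iff_two_le_count.mpr h)
  refine ⟨n, m, hnm, m.isLt, ?_, ?_⟩
  · rw [List.getD_eq_getElem _ _ n.isLt]; rw [List.get_eq_getElem] at he1; omega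
  · rw [List.getD_eq_getElem _ _ m.isLt]; rw [List.get_eq_getElem] at he2; omega

lemma contains213_iff {σ : List ℕ} :
    Contains σ [2, 1, 3] ↔ ∃ i j k, i < j ∧ j < k ∧ k < σ.length ∧
      σ.getD j 0 < σ.getD i 0 ∧ σ.getD i 0 < σ.getD k 0 := by
  constructor
  · rintro ⟨ι, hmono, hrel⟩
    have e : ∀ x : Fin σ.length, σ.get x = σ.getD x.val 0 := by
      intro x; rw [List.get_eq_getElem, List.getD_eq_getElem]
    set s0 : Fin ([2,1,3].length) := ⟨0, by norm_num⟩
    set s1 : Fin ([2,1,3].length) := ⟨1, by norm_num⟩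
    set s2 : Fin ([2,1,3].length) := ⟨2, by norm_num⟩
    have h10 := hrel s1 s0
    have h02 := hrel s0 s2
    simp only [e] at h10 h02
    refine ⟨ι s0, ι s1, ι s2, hmono (by decide),
      hmono (by decide), (ι s2).isLt, ?_, ?_⟩
    · exact h10.mp (by norm_num [s0, s1])
    · exact h02.mp (by norm_num [s0, s2])
  · rintro ⟨i, j, k, hij, hjk, hk, h1, h2⟩
    have hi : i < σ.length := by omega
    have hj : j < σ.length := by omega
    rw [List.getD_eq_getElem _ _ hj, List.getD_eq_getElem _ _ hi] at h1
    rw [List.getD_eq_getElem _ _ hi, List.getD_eq_getElem _ _ hk] at h2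
    refine ⟨fun s => if s.val = 0 then ⟨i, hi⟩ else if s.val = 1 then ⟨j, hj⟩ else ⟨k, hk⟩,
      ?_, ?_⟩
    · intro s t hst
      fin_cases s <;> fin_cases t <;> simp_all [Fin.lt_def] <;> omega
    · intro s t
      fin_cases s <;> fin_cases t <;> simp [Fin.lt_def, List.get_eq_getElem] <;> omega

lemma contains1122_iff {σ : List ℕ} :
    Contains σ [1, 1, 2, 2] ↔ ∃ i j k l, i < j ∧ j < k ∧ k < l ∧ l < σ.length ∧
      σ.getD i 0 = σ.getD j 0 ∧ σ.getD k 0 = σ.getD l 0 ∧ σ.getD i 0 < σ.getD k 0 := by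
  constructor
  · rintro ⟨ι, hmono, hrel⟩
    have e : ∀ x : Fin σ.length, σ.get x = σ.getD x.val 0 := by
      intro x; rw [List.get_eq_getElem, List.getD_eq_getElem]
    set s0 : Fin ([1,1,2,2].length) := ⟨0, by norm_num⟩
    set s1 : Fin ([1,1,2,2].length) := ⟨1, by norm_num⟩
    set s2 : Fin ([1,1,2,2].length) := ⟨2, by norm_num⟩
    set s3 : Fin ([1,1,2,2].length) := ⟨3, by norm_num⟩
    have h01 := hrel s0 s1
    have h10 := hrel s1 s0
    have h23 := hrel s2 s3
    have h32 := hrel s3 s2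
    have h02 := hrel s0 s2
    simp only [e] at h01 h10 h23 h32 h02
    refine ⟨ι s0, ι s1, ι s2, ι s3, hmono (by decide),
      hmono (by decide), hmono (by decide),
      (ι s3).isLt, ?_, ?_, ?_⟩
    · have a1 : ¬ σ.getD (ι s0).val 0 < σ.getD (ι s1).val 0 := by
        rw [← h01]; norm_num [s0, s1]
      have a2 : ¬ σ.getD (ι s1).val 0 < σ.getD (ι s0).val 0 := by
        rw [← h10]; norm_num [s0, s1]
      omega
    · have a1 : ¬ σ.getD (ι s2).val 0 < σ.getD (ι s3).val 0 := by
        rw [← h23]; norm_num [s2, s3]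
      have a2 : ¬ σ.getD (ι s3).val 0 < σ.getD (ι s2).val 0 := by
        rw [← h32]; norm_num [s2, s3]
      omega
    · exact h02.mp (by norm_num [s0, s2])
  · rintro ⟨i, j, k, l, hij, hjk, hkl, hl, h1, h2, h3⟩
    have hi : i < σ.length := by omega
    have hj : j < σ.length := by omega
    have hk : k < σ.length := by omega
    rw [List.getD_eq_getElem _ _ hi, List.getD_eq_getElem _ _ hj] at h1
    rw [List.getD_eq_getElem _ _ hk, List.getD_eq_getElem _ _ hl] at h2
    rw [List.getD_eq_getElem _ _ hi, List.getD_eq_getElem _ _ hk] at h3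
    have v3 : ((3 : Fin 4) : ℕ) = 3 := rfl
    refine ⟨fun s => if s.val = 0 then ⟨i, hi⟩ else if s.val = 1 then ⟨j, hj⟩
      else if s.val = 2 then ⟨k, hk⟩ else ⟨l, hl⟩, ?_, ?_⟩
    · intro s t hst
      fin_cases s <;> fin_cases t <;> simp_all [Fin.lt_def] <;> omega
    · intro s t
      fin_cases s <;> fin_cases t <;> simp [Fin.lt_def, List.get_eq_getElem, v3] <;> omega

def P (n : ℕ) (σ : List ℕ) : Prop :=
  IsStirling n σ ∧ Avoids σ [2, 1, 3] ∧ Avoids σ [1, 1, 2, 2]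

def comp (b : ℕ) (A B : List ℕ) : List ℕ :=
  (b+1) :: (A.map (· + (b+1)) ++ (b+1) :: B)

section GD
variable (c : ℕ) (A B : List ℕ)

lemma gd_len : (c :: (A ++ c :: B)).length = A.length + B.length + 2 := by
  simp; omega

lemma gd_zero : (c :: (A ++ c :: B)).getD 0 0 = c := rfl

lemma gd_A {i : ℕ} (h : i < A.length) :
    (c :: (A ++ c :: B)).getD (i+1) 0 = A.getD i 0 := by
  rw [List.getD_cons_succ, List.getD_append _ _ _ _ h]

lemma gd_c : (c :: (A ++ c :: B)).getD (A.length + 1) 0 = c := by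
  rw [List.getD_cons_succ, List.getD_append_right _ _ _ _ le_rfl, Nat.sub_self,
    List.getD_cons_zero]

lemma gd_B (i : ℕ) : (c :: (A ++ c :: B)).getD (i + A.length + 2) 0 = B.getD i 0 := by
  have h1 : i + A.length + 2 = (i + A.length + 1) + 1 := rfl
  rw [h1, List.getD_cons_succ, List.getD_append_right _ _ _ _ (by omega)]
  have h2 : i + A.length + 1 - A.length = i + 1 := by omega
  rw [h2, List.getD_cons_succ]

end GD

lemma stirling_mem {n : ℕ} {σ : List ℕ} (h : IsStirling n σ) {x : ℕ} (hx : x ∈ σ) :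
    1 ≤ x ∧ x ≤ n := by
  have hc := h.1 x
  have : 0 < σ.count x := List.count_pos_iff.mpr hx
  by_contra hcon
  rw [if_neg hcon] at hc
  omega

lemma stirling_length {n : ℕ} {σ : List ℕ} (h : IsStirling n σ) : σ.length = 2 * n := by
  have key : ∑ x ∈ σ.toFinset, σ.count x = σ.length := by
    simpa using Multiset.toFinset_sum_count_eq (σ : Multiset ℕ)
  have hsub : σ.toFinset ⊆ Finset.Icc 1 n := by
    intro x hx
    rw [List.mem_toFinset] at hx
    have := stirling_mem h hx
    rw [Finset.mem_Icc]; omega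
  have hext : ∑ x ∈ Finset.Icc 1 n, σ.count x = σ.length := by
    rw [← key]
    exact (Finset.sum_subset hsub fun x _ hx =>
      List.count_eq_zero.mpr (fun hmem => hx (List.mem_toFinset.mpr hmem))).symm
  have hval : ∑ x ∈ Finset.Icc 1 n, σ.count x = 2 * n := by
    rw [Finset.sum_congr rfl (fun x hx => by
      rw [h.1 x, if_pos (Finset.mem_Icc.mp hx)])]
    rw [Finset.sum_const, Nat.card_Icc, smul_eq_mul]
    omega
  omega

lemma comp_P_aux {a b c : ℕ} {A B : List ℕ} (hA : P a A) (hB : P b B)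
    (hc : c = b + 1) : P (a + b + 1) (c :: (A.map (· + c) ++ c :: B)) := by
  set M := A.map (· + c) with hM
  set τ := c :: (M ++ c :: B) with hτ2
  have hMlen : M.length = A.length := List.length_map _
  have hAlen : A.length = 2 * a := stirling_length hA.1
  have hBlen : B.length = 2 * b := stirling_length hB.1
  have hAmem : ∀ x ∈ A, 1 ≤ x ∧ x ≤ a := fun x hx => stirling_mem hA.1 hx
  have hBmem : ∀ x ∈ B, 1 ≤ x ∧ x ≤ b := fun x hx => stirling_mem hB.1 hx
  have hlen : τ.length = A.length + B.length + 2 := by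
    rw [hτ2, gd_len, hMlen]
  have g0 : τ.getD 0 0 = c := rfl
  have gc : τ.getD (A.length + 1) 0 = c := by
    have := gd_c c M B; rw [hMlen] at this; exact this
  have gB : ∀ i : ℕ, τ.getD (i + A.length + 2) 0 = B.getD i 0 := by
    intro i; have := gd_B c M B i; rw [hMlen] at this; exact this
  have vA : ∀ i, 1 ≤ i → i ≤ A.length →
      c < τ.getD i 0 ∧ τ.getD i 0 = A.getD (i-1) 0 + c := by
    intro i h1 h2
    have hi : i - 1 < A.length := by omega
    have hMg : M.getD (i-1) 0 = A.getD (i-1) 0 + c := by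
      rw [hM, List.getD_eq_getElem _ _ (show i - 1 < (A.map (· + c)).length by
        rw [List.length_map]; exact hi), List.getElem_map,
        List.getD_eq_getElem _ _ hi]
    have hgd : τ.getD i 0 = A.getD (i-1) 0 + c := by
      have e1 := gd_A c M B (show i - 1 < M.length by omega)
      rw [hMg] at e1
      have e2 : τ.getD i 0 = τ.getD (i - 1 + 1) 0 := by
        rw [show i - 1 + 1 = i by omega]
      rw [e2]
      exact e1
    have hmem := hAmem _ (getD_mem hi)
    exact ⟨by omega, hgd⟩
  have vB : ∀ i, A.length + 2 ≤ i → i < τ.length →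
      τ.getD i 0 < c ∧ τ.getD i 0 = B.getD (i - A.length - 2) 0 := by
    intro i h1 h2
    have heq : τ.getD i 0 = B.getD (i - A.length - 2) 0 := by
      have := gB (i - A.length - 2)
      rw [show i - A.length - 2 + A.length + 2 = i by omega] at this
      exact this
    have hmem := hBmem _ (getD_mem (show i - A.length - 2 < B.length by omega))
    exact ⟨by omega, heq⟩
  have regc : ∀ i, i < τ.length → τ.getD i 0 = c → i = 0 ∨ i = A.length + 1 := by
    intro i hi he
    by_contra hcon
    push_neg at hcon
    rcases (show 1 ≤ i ∧ i ≤ A.length ∨ A.length + 2 ≤ i by omega) with h | h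
    · have := vA i h.1 h.2; omega
    · have := vB i h hi; omega
  have reggt : ∀ i, i < τ.length → c < τ.getD i 0 → 1 ≤ i ∧ i ≤ A.length := by
    intro i hi he
    by_contra hcon
    rcases (show i = 0 ∨ i = A.length + 1 ∨ A.length + 2 ≤ i by omega) with h | h | h
    · subst h; omega
    · subst h; omega
    · have := vB i h hi; omega
  have reglt : ∀ i, i < τ.length → τ.getD i 0 < c → A.length + 2 ≤ i := by
    intro i hi he
    by_contra hcon
    rcases (show i = 0 ∨ i = A.length + 1 ∨ (1 ≤ i ∧ i ≤ A.length) by omega) with h | h | h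
    · subst h; omega
    · subst h; omega
    · have := vA i h.1 h.2; omega
  have hMc : ∀ i, M.count i = if c + 1 ≤ i ∧ i ≤ c + a then 2 else 0 := by
    intro i
    by_cases hi : c < i
    · have heq : i = (i - c) + c := by omega
      have hcm := List.count_map_of_injective A (fun x => x + c)
        (add_left_injective c) (i - c)
      rw [heq, hM, hcm, hA.1.1 (i - c)]
      split_ifs <;> omega
    · rw [List.count_eq_zero.mpr, if_neg (by omega)]
      intro hmem
      rw [hM, List.mem_map] at hmem
      obtain ⟨x, hx, rfl⟩ := hmem
      have := hAmem x hx; omega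
  have hcount : ∀ i, τ.count i = if 1 ≤ i ∧ i ≤ a + b + 1 then 2 else 0 := by
    intro i
    have hstep : τ.count i = M.count i + B.count i + (if c = i then 2 else 0) := by
      rw [hτ2]
      simp only [List.count_cons, List.count_append, beq_iff_eq]
      split_ifs <;> omega
    rw [hstep, hMc i, hB.1.1 i]
    split_ifs <;> omega
  have hbtw : ∀ j k l : ℕ, j < k → k < l → l < τ.length →
      τ.getD j 0 = τ.getD l 0 → τ.getD j 0 < τ.getD k 0 := by
    intro j k l hjk hkl hl he
    have hj : j < τ.length := by omega
    have hk : k < τ.length := by omega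
    rcases lt_trichotomy (τ.getD j 0) c with hv | hv | hv
    · have hjB := reglt j hj hv
      obtain ⟨_, ej⟩ := vB j hjB hj
      obtain ⟨_, ek⟩ := vB k (by omega) hk
      obtain ⟨_, el⟩ := vB l (by omega) hl
      have := hB.1.2 (j - A.length - 2) (k - A.length - 2) (l - A.length - 2)
        (by omega) (by omega) (by omega) (by omega)
      omega
    · have hj0 := regc j hj hv
      have hl0 := regc l hl (by omega)
      have hj' : j = 0 := by omega
      have hl' : l = A.length + 1 := by omega
      have := vA k (by omega) (by omega)
      omega
    · have hjA := reggt j hj hv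
      have hlA := reggt l hl (by omega)
      obtain ⟨_, ej⟩ := vA j hjA.1 hjA.2
      obtain ⟨_, ek⟩ := vA k (by omega) (by omega)
      obtain ⟨_, el⟩ := vA l hlA.1 hlA.2
      have := hA.1.2 (j-1) (k-1) (l-1) (by omega) (by omega) (by omega) (by omega)
      omega
  have hav3 : Avoids τ [2,1,3] := by
    rw [Avoids, contains213_iff]
    rintro ⟨i, j, k, hij, hjk, hk, h1, h2⟩
    have hi : i < τ.length := by omega
    have hj : j < τ.length := by omega
    rcases lt_trichotomy (τ.getD i 0) c with hv | hv | hv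
    · have hiB := reglt i hi hv
      obtain ⟨_, ei⟩ := vB i hiB hi
      obtain ⟨_, ej⟩ := vB j (by omega) hj
      obtain ⟨_, ek⟩ := vB k (by omega) hk
      exact hB.2.1 (contains213_iff.mpr ⟨i - A.length - 2, j - A.length - 2,
        k - A.length - 2, by omega, by omega, by omega, by omega, by omega⟩)
    · have hjB := reglt j hj (by omega)
      have hkA := reggt k hk (by omega)
      omega
    · have hiA := reggt i hi hv
      have hkA := reggt k hk (by omega)
      obtain ⟨_, ei⟩ := vA i hiA.1 hiA.2
      obtain ⟨_, ej⟩ := vA j (by omega) (by omega)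
      obtain ⟨_, ek⟩ := vA k hkA.1 hkA.2
      exact hA.2.1 (contains213_iff.mpr ⟨i - 1, j - 1, k - 1, by omega, by omega,
        by omega, by omega, by omega⟩)
  have hav4 : Avoids τ [1,1,2,2] := by
    rw [Avoids, contains1122_iff]
    rintro ⟨i, j, k, l, hij, hjk, hkl, hl, h1, h2, h3⟩
    have hi : i < τ.length := by omega
    have hj : j < τ.length := by omega
    have hk : k < τ.length := by omega
    rcases lt_trichotomy (τ.getD i 0) c with hv | hv | hv
    · have hiB := reglt i hi hv
      obtain ⟨_, ei⟩ := vB i hiB hi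
      obtain ⟨_, ej⟩ := vB j (by omega) hj
      obtain ⟨_, ek⟩ := vB k (by omega) hk
      obtain ⟨_, el⟩ := vB l (by omega) hl
      exact hB.2.2 (contains1122_iff.mpr ⟨i - A.length - 2, j - A.length - 2,
        k - A.length - 2, l - A.length - 2, by omega, by omega, by omega, by omega,
        by omega, by omega, by omega⟩)
    · have hi0 := regc i hi hv
      have hj0 := regc j hj (by omega)
      have hkB := vB k (by omega) hk
      omega
    · have hiA := reggt i hi hv
      have hjA := reggt j hj (by omega)
      have hkA := reggt k hk (by omega)
      have hlA := reggt l hl (by omega)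
      obtain ⟨_, ei⟩ := vA i hiA.1 hiA.2
      obtain ⟨_, ej⟩ := vA j hjA.1 hjA.2
      obtain ⟨_, ek⟩ := vA k hkA.1 hkA.2
      obtain ⟨_, el⟩ := vA l hlA.1 hlA.2
      exact hA.2.2 (contains1122_iff.mpr ⟨i - 1, j - 1, k - 1, l - 1, by omega, by omega,
        by omega, by omega, by omega, by omega, by omega⟩)
  exact ⟨⟨hcount, hbtw⟩, hav3, hav4⟩

lemma comp_P {a b : ℕ} {A B : List ℕ} (hA : P a A) (hB : P b B) :
    P (a + b + 1) (comp b A B) :=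
  comp_P_aux hA hB rfl

lemma P_decomp {n : ℕ} {σ : List ℕ} (h : P n σ) (hn : n ≠ 0) :
    ∃ a b A B, n = a + b + 1 ∧ P a A ∧ P b B ∧ σ = comp b A B := by
  have hlenσ : σ.length = 2 * n := stirling_length h.1
  have h1σ : (1 : ℕ) ∈ σ := by
    have := h.1.1 1
    rw [if_pos ⟨le_rfl, by omega⟩] at this
    exact List.count_pos_iff.mp (by omega)
  obtain ⟨c, rest, rfl⟩ : ∃ c rest, σ = c :: rest := by
    cases σ with
    | nil => simp at h1σ
    | cons x xs => exact ⟨x, xs, rfl⟩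
  have hcb := stirling_mem h.1 (List.mem_cons_self)
  have hcc : (c :: rest).count c = 2 := by rw [h.1.1 c, if_pos hcb]
  have hcrest : rest.count c = 1 := by
    rw [List.count_cons_self] at hcc; omega
  obtain ⟨A, B, rfl⟩ := List.append_of_mem (List.count_pos_iff.mp
    (show 0 < rest.count c by omega))
  have hc0 : A.count c = 0 ∧ B.count c = 0 := by
    rw [List.count_append, List.count_cons_self] at hcrest; omega
  have hcAnot : c ∉ A := List.count_eq_zero.mp hc0.1
  have hcBnot : c ∉ B := List.count_eq_zero.mp hc0.2
  have hlen2 : A.length + B.length + 2 = 2 * n := by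
    have := gd_len c A B; omega
  have hσmemA : ∀ x ∈ A, 1 ≤ x ∧ x ≤ n := fun x hx =>
    stirling_mem h.1 (by simp [hx])
  have hσmemB : ∀ x ∈ B, 1 ≤ x ∧ x ≤ n := fun x hx =>
    stirling_mem h.1 (by simp [hx])
  -- every element of A is > c
  have hgt : ∀ x ∈ A, c < x := by
    intro x hx
    obtain ⟨i, hi, hieq⟩ := mem_getD hx
    have hbt := h.1.2 0 (i+1) (A.length+1) (by omega) (by omega)
      (by rw [gd_len]; omega) (by rw [gd_zero, gd_c])
    rw [gd_zero, gd_A c A B hi, hieq] at hbt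
    exact hbt
  -- no element is in both A and B
  have hAB : ∀ x, x ∈ A → x ∈ B → False := by
    intro x hxA hxB
    obtain ⟨iA, hiA, eA⟩ := mem_getD hxA
    obtain ⟨iB, hiB, eB⟩ := mem_getD hxB
    have hbt := h.1.2 (iA+1) (A.length+1) (iB + A.length + 2) (by omega) (by omega)
      (by rw [gd_len]; omega)
      (by rw [gd_A c A B hiA, gd_B, eA, eB])
    rw [gd_A c A B hiA, gd_c, eA] at hbt
    have := hgt x hxA; omega
  have hBcount : ∀ x ∈ B, B.count x = 2 := by
    intro x hx
    have hxc : x ≠ c := fun e => hcBnot (e ▸ hx)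
    have hxA : A.count x = 0 := List.count_eq_zero.mpr (fun hA' => hAB x hA' hx)
    have hcnt := h.1.1 x
    rw [if_pos (hσmemB x hx)] at hcnt
    rw [List.count_cons, List.count_append, List.count_cons] at hcnt
    simp only [beq_iff_eq] at hcnt
    split_ifs at hcnt <;> omega
  have hAcount : ∀ x ∈ A, A.count x = 2 := by
    intro x hx
    have hxc : x ≠ c := fun e => hcAnot (e ▸ hx)
    have hxB : B.count x = 0 := List.count_eq_zero.mpr (fun hB' => hAB x hx hB')
    have hcnt := h.1.1 x
    rw [if_pos (hσmemA x hx)] at hcnt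
    rw [List.count_cons, List.count_append, List.count_cons] at hcnt
    simp only [beq_iff_eq] at hcnt
    split_ifs at hcnt <;> omega
  -- every element of B is < c
  have hBlt : ∀ x ∈ B, x < c := by
    intro x hx
    have h2 := hBcount x hx
    obtain ⟨i, j, hij, hjlen, ei, ej⟩ := two_idx (show 2 ≤ B.count x by omega)
    have hnc : ¬ (c < x) := by
      intro hcx
      exact h.2.2 (contains1122_iff.mpr ⟨0, A.length + 1, i + A.length + 2,
        j + A.length + 2, by omega, by omega, by omega, by rw [gd_len]; omega,
        by rw [gd_zero, gd_c],
        by rw [gd_B, gd_B, ei, ej],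
        by rw [gd_zero, gd_B, ei]; exact hcx⟩)
    have hxc : x ≠ c := fun e => hcBnot (e ▸ hx)
    omega
  -- toFinset computations
  have hAsub : A.toFinset ⊆ Finset.Icc (c+1) n := by
    intro x hx
    rw [List.mem_toFinset] at hx
    rw [Finset.mem_Icc]
    have := hgt x hx; have := hσmemA x hx; omega
  have hBsub : B.toFinset ⊆ Finset.Icc 1 (c-1) := by
    intro x hx
    rw [List.mem_toFinset] at hx
    rw [Finset.mem_Icc]
    have := hBlt x hx; have := hσmemB x hx; omega
  have kA1 : ∑ x ∈ A.toFinset, A.count x = A.length := by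
    simpa using Multiset.toFinset_sum_count_eq (A : Multiset ℕ)
  have kA2 : ∑ x ∈ A.toFinset, A.count x = 2 * A.toFinset.card := by
    rw [Finset.sum_congr rfl (fun x hx => hAcount x (List.mem_toFinset.mp hx)),
      Finset.sum_const, smul_eq_mul]
    omega
  have kB1 : ∑ x ∈ B.toFinset, B.count x = B.length := by
    simpa using Multiset.toFinset_sum_count_eq (B : Multiset ℕ)
  have kB2 : ∑ x ∈ B.toFinset, B.count x = 2 * B.toFinset.card := by
    rw [Finset.sum_congr rfl (fun x hx => hBcount x (List.mem_toFinset.mp hx)),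
      Finset.sum_const, smul_eq_mul]
    omega
  have hAcardle : A.toFinset.card ≤ n + 1 - (c + 1) := by
    have := Finset.card_le_card hAsub
    rwa [Nat.card_Icc] at this
  have hBcardle : B.toFinset.card ≤ c - 1 + 1 - 1 := by
    have := Finset.card_le_card hBsub
    rwa [Nat.card_Icc] at this
  have hAfin : A.toFinset = Finset.Icc (c+1) n :=
    Finset.eq_of_subset_of_card_le hAsub (by rw [Nat.card_Icc]; omega)
  have hBfin : B.toFinset = Finset.Icc 1 (c-1) :=
    Finset.eq_of_subset_of_card_le hBsub (by rw [Nat.card_Icc]; omega)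
  have countA : ∀ y, A.count y = if c + 1 ≤ y ∧ y ≤ n then 2 else 0 := by
    intro y
    by_cases hy : y ∈ A
    · have hyI : y ∈ Finset.Icc (c+1) n := by
        rw [← hAfin]; exact List.mem_toFinset.mpr hy
      rw [hAcount y hy, if_pos (Finset.mem_Icc.mp hyI)]
    · rw [List.count_eq_zero.mpr hy, if_neg]
      intro hcond
      exact hy (List.mem_toFinset.mp (by rw [hAfin]; exact Finset.mem_Icc.mpr hcond))
  have countB : ∀ y, B.count y = if 1 ≤ y ∧ y ≤ c - 1 then 2 else 0 := by
    intro y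
    by_cases hy : y ∈ B
    · have hyI : y ∈ Finset.Icc 1 (c-1) := by
        rw [← hBfin]; exact List.mem_toFinset.mpr hy
      rw [hBcount y hy, if_pos (Finset.mem_Icc.mp hyI)]
    · rw [List.count_eq_zero.mpr hy, if_neg]
      intro hcond
      exact hy (List.mem_toFinset.mp (by rw [hBfin]; exact Finset.mem_Icc.mpr hcond))
  -- the shifted-down copy of A
  set A₀ := A.map (fun x => x - c) with hA₀
  have hA0A : A₀.map (fun x => x + c) = A := by
    rw [hA₀, List.map_map]
    have hcg : ∀ x ∈ A, ((fun x => x + c) ∘ (fun x => x - c)) x = id x := by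
      intro x hx
      simp only [Function.comp, id]
      have := hgt x hx; omega
    rw [List.map_congr_left hcg, List.map_id]
  have lenA0 : A₀.length = A.length := List.length_map _
  have countA0 : ∀ y, A₀.count y = if 1 ≤ y ∧ y ≤ n - c then 2 else 0 := by
    intro y
    have hcm := List.count_map_of_injective A₀ (fun x => x + c) (add_left_injective c) y
    rw [hA0A] at hcm
    rw [← hcm, countA (y + c)]
    split_ifs <;> omega
  have gdA0 : ∀ i, A₀.getD i 0 = A.getD i 0 - c := by
    intro i
    by_cases hi : i < A.length
    · rw [hA₀, List.getD_eq_getElem _ _ (show i < (A.map (fun x => x - c)).length by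
        rw [List.length_map]; exact hi), List.getElem_map, List.getD_eq_getElem _ _ hi]
    · rw [List.getD_eq_default _ _ (by rw [lenA0]; omega),
        List.getD_eq_default _ _ (by omega)]
      omega
  have vAi : ∀ i, i < A.length → c < A.getD i 0 := fun i hi => hgt _ (getD_mem hi)
  -- betweenness for A and B
  have btwA : ∀ j k l : ℕ, j < k → k < l → l < A.length →
      A.getD j 0 = A.getD l 0 → A.getD j 0 < A.getD k 0 := by
    intro j k l hjk hkl hl he
    have hbt := h.1.2 (j+1) (k+1) (l+1) (by omega) (by omega) (by rw [gd_len]; omega)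
      (by rw [gd_A c A B (by omega), gd_A c A B hl]; exact he)
    rw [gd_A c A B (by omega), gd_A c A B (by omega)] at hbt
    exact hbt
  have btwB : ∀ j k l : ℕ, j < k → k < l → l < B.length →
      B.getD j 0 = B.getD l 0 → B.getD j 0 < B.getD k 0 := by
    intro j k l hjk hkl hl he
    have hbt := h.1.2 (j + A.length + 2) (k + A.length + 2) (l + A.length + 2)
      (by omega) (by omega) (by rw [gd_len]; omega)
      (by rw [gd_B, gd_B]; exact he)
    rw [gd_B, gd_B] at hbt
    exact hbt
  have btwA0 : ∀ j k l : ℕ, j < k → k < l → l < A₀.length →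
      A₀.getD j 0 = A₀.getD l 0 → A₀.getD j 0 < A₀.getD k 0 := by
    intro j k l hjk hkl hl he
    rw [lenA0] at hl
    rw [gdA0, gdA0] at he
    have v1 := vAi j (by omega)
    have v2 := vAi l (by omega)
    have v3 := btwA j k l hjk hkl hl (by omega)
    rw [gdA0, gdA0]
    omega
  -- avoidance for A and B
  have av3A : Avoids A [2,1,3] := by
    rw [Avoids, contains213_iff]
    rintro ⟨i, j, k, hij, hjk, hk, h1, h2⟩
    exact h.2.1 (contains213_iff.mpr ⟨i+1, j+1, k+1, by omega, by omega,
      by rw [gd_len]; omega,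
      by rw [gd_A c A B (by omega), gd_A c A B (by omega)]; exact h1,
      by rw [gd_A c A B (by omega), gd_A c A B hk]; exact h2⟩)
  have av4A : Avoids A [1,1,2,2] := by
    rw [Avoids, contains1122_iff]
    rintro ⟨i, j, k, l, hij, hjk, hkl, hl, h1, h2, h3⟩
    exact h.2.2 (contains1122_iff.mpr ⟨i+1, j+1, k+1, l+1, by omega, by omega, by omega,
      by rw [gd_len]; omega,
      by rw [gd_A c A B (by omega), gd_A c A B (by omega)]; exact h1,
      by rw [gd_A c A B (by omega), gd_A c A B hl]; exact h2,
      by rw [gd_A c A B (by omega), gd_A c A B (by omega)]; exact h3⟩)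
  have av3B : Avoids B [2,1,3] := by
    rw [Avoids, contains213_iff]
    rintro ⟨i, j, k, hij, hjk, hk, h1, h2⟩
    exact h.2.1 (contains213_iff.mpr ⟨i + A.length + 2, j + A.length + 2, k + A.length + 2,
      by omega, by omega, by rw [gd_len]; omega,
      by rw [gd_B, gd_B]; exact h1,
      by rw [gd_B, gd_B]; exact h2⟩)
  have av4B : Avoids B [1,1,2,2] := by
    rw [Avoids, contains1122_iff]
    rintro ⟨i, j, k, l, hij, hjk, hkl, hl, h1, h2, h3⟩
    exact h.2.2 (contains1122_iff.mpr ⟨i + A.length + 2, j + A.length + 2,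
      k + A.length + 2, l + A.length + 2, by omega, by omega, by omega,
      by rw [gd_len]; omega,
      by rw [gd_B, gd_B]; exact h1,
      by rw [gd_B, gd_B]; exact h2,
      by rw [gd_B, gd_B]; exact h3⟩)
  have av3A0 : Avoids A₀ [2,1,3] := by
    rw [Avoids, contains213_iff]
    rintro ⟨i, j, k, hij, hjk, hk, h1, h2⟩
    rw [lenA0] at hk
    rw [gdA0, gdA0] at h1
    rw [gdA0, gdA0] at h2
    have v1 := vAi i (by omega)
    have v2 := vAi j (by omega)
    have v3 := vAi k (by omega)
    exact av3A (contains213_iff.mpr ⟨i, j, k, hij, hjk, hk, by omega, by omega⟩)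
  have av4A0 : Avoids A₀ [1,1,2,2] := by
    rw [Avoids, contains1122_iff]
    rintro ⟨i, j, k, l, hij, hjk, hkl, hl, h1, h2, h3⟩
    rw [lenA0] at hl
    rw [gdA0, gdA0] at h1
    rw [gdA0, gdA0] at h2
    rw [gdA0, gdA0] at h3
    have v1 := vAi i (by omega)
    have v2 := vAi j (by omega)
    have v3 := vAi k (by omega)
    have v4 := vAi l (by omega)
    exact av4A (contains1122_iff.mpr ⟨i, j, k, l, hij, hjk, hkl, hl,
      by omega, by omega, by omega⟩)
  -- assemble
  refine ⟨n - c, c - 1, A₀, B, by omega,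
    ⟨⟨countA0, btwA0⟩, av3A0, av4A0⟩,
    ⟨⟨countB, btwB⟩, av3B, av4B⟩, ?_⟩
  have hc1 : c - 1 + 1 = c := by omega
  rw [comp, hc1, hA0A]

lemma P_nil : P 0 [] := by
  refine ⟨⟨fun i => by rw [List.count_nil, if_neg (by omega)],
    fun j k l h1 h2 h3 => by simp at h3⟩, ?_, ?_⟩
  · rintro ⟨ι, -, -⟩
    exact absurd (ι ⟨0, by norm_num⟩).isLt (Nat.not_lt_zero _)
  · rintro ⟨ι, -, -⟩
    exact absurd (ι ⟨0, by norm_num⟩).isLt (Nat.not_lt_zero _)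

def g : Tree Unit → List ℕ
  | .nil => []
  | .node _ L R => comp R.numNodes (g L) (g R)

lemma g_P (t : Tree Unit) : P t.numNodes (g t) := by
  induction t with
  | nil => exact P_nil
  | node a L R ihL ihR => exact comp_P ihL ihR

lemma g_surj : ∀ n σ, P n σ → ∃ t : Tree Unit, t.numNodes = n ∧ g t = σ := by
  intro n
  induction n using Nat.strong_induction_on with
  | _ n ih =>
    intro σ hσ
    by_cases hn : n = 0
    · subst hn
      have hl : σ.length = 0 := by have := stirling_length hσ.1; omega
      have hσnil : σ = [] := List.length_eq_zero_iff.mp hl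
      exact ⟨Tree.nil, rfl, by rw [hσnil]; rfl⟩
    · obtain ⟨a, b, A, B, hab, hPA, hPB, rfl⟩ := P_decomp hσ hn
      obtain ⟨tL, hL, rfl⟩ := ih a (by omega) A hPA
      obtain ⟨tR, hR, rfl⟩ := ih b (by omega) B hPB
      refine ⟨Tree.node () tL tR, ?_, ?_⟩
      · show tL.numNodes + tR.numNodes + 1 = n
        omega
      · show comp tR.numNodes (g tL) (g tR) = comp b (g tL) (g tR)
        rw [hR]

lemma split_eq : ∀ {u1 v1 u2 v2 : List ℕ} {c : ℕ},
    u1 ++ c :: v1 = u2 ++ c :: v2 → c ∉ u1 → c ∉ u2 → u1 = u2 ∧ v1 = v2 := by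
  intro u1
  induction u1 with
  | nil =>
    intro v1 u2 v2 c h h1 h2
    cases u2 with
    | nil => simpa using h
    | cons d u2' =>
      simp only [List.nil_append, List.cons_append, List.cons.injEq] at h
      obtain ⟨rfl, -⟩ := h
      exact absurd (List.mem_cons_self) h2
  | cons d u1' ih =>
    intro v1 u2 v2 c h h1 h2
    cases u2 with
    | nil =>
      simp only [List.nil_append, List.cons_append, List.cons.injEq] at h
      obtain ⟨rfl, -⟩ := h
      exact absurd (List.mem_cons_self) h1
    | cons e u2' =>
      simp only [List.cons_append, List.cons.injEq] at h
      obtain ⟨rfl, h'⟩ := h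
      have h1' : c ∉ u1' := fun hm => h1 (List.mem_cons_of_mem _ hm)
      have h2' : c ∉ u2' := fun hm => h2 (List.mem_cons_of_mem _ hm)
      obtain ⟨e1, e2⟩ := ih h' h1' h2'
      exact ⟨by rw [e1], e2⟩

lemma g_inj : Function.Injective g := by
  intro t1
  induction t1 with
  | nil =>
    intro t2 h
    cases t2 with
    | nil => rfl
    | node u L R => simp [g, comp] at h
  | node u L R ihL ihR =>
    intro t2 h
    cases t2 with
    | nil => simp [g, comp] at h
    | node u2 L2 R2 =>
      have h' : (R.numNodes + 1) :: ((g L).map (· + (R.numNodes+1)) ++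
            (R.numNodes+1) :: g R)
          = (R2.numNodes + 1) :: ((g L2).map (· + (R2.numNodes+1)) ++
            (R2.numNodes+1) :: g R2) := h
      injection h' with hb htail
      have hbb : R2.numNodes = R.numNodes := by omega
      rw [hbb] at htail
      have hnotin1 : (R.numNodes + 1) ∉ (g L).map (· + (R.numNodes+1)) := by
        intro hm
        rw [List.mem_map] at hm
        obtain ⟨x, hx, he⟩ := hm
        try simp only at he
        have := stirling_mem (g_P L).1 hx
        omega
      have hnotin2 : (R.numNodes + 1) ∉ (g L2).map (· + (R.numNodes+1)) := by
        intro hm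
        rw [List.mem_map] at hm
        obtain ⟨x, hx, he⟩ := hm
        try simp only at he
        have := stirling_mem (g_P L2).1 hx
        omega
      obtain ⟨hMeq, hBeq⟩ := split_eq htail hnotin1 hnotin2
      have hLeq : g L = g L2 :=
        List.map_injective_iff.mpr (add_left_injective _) hMeq
      cases u; cases u2
      rw [ihL hLeq, ihR hBeq]


/-- Stirling permutations avoiding 213 and 1122 are counted by Catalan numbers. -/
theorem stirling_avoid_213_1122_eq_catalan (n : ℕ) :
    {σ : List ℕ | IsStirling n σ ∧ Avoids σ [2, 1, 3] ∧ Avoids σ [1, 1, 2, 2]}.ncard =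
      catalan n := by
  have hset : {σ : List ℕ | IsStirling n σ ∧ Avoids σ [2, 1, 3] ∧ Avoids σ [1, 1, 2, 2]}
      = g '' ↑(Tree.treesOfNumNodesEq n) := by
    ext σ
    simp only [Set.mem_setOf_eq, Set.mem_image, Finset.mem_coe,
      BinaryTree.mem_treesOfNumNodesEq]
    constructor
    · intro hσ
      obtain ⟨t, h1, h2⟩ := g_surj n σ hσ
      exact ⟨t, h1, h2⟩
    · rintro ⟨t, rfl, rfl⟩
      exact g_P t
  rw [hset, Set.ncard_image_of_injective _ g_inj, Set.ncard_coe_finset,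
    BinaryTree.treesOfNumNodesEq_card_eq_catalan]
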